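/- arXiv:1003.1969 — 3 statements merged into one kernel-verified Lean document; each statement's English description precedes it below -/
import Mathlib

section
/- For every positive integer N, setting f_N(x) = x^2 - 4·(2N)! and a_i = i! + (2N)!/i! for 1 ≤ i ≤ N, the sequence (a_i)_{i=1}^N is strictly decreasing in positive integers and each f_N(a_i) is a perfect square in ℤ. -/
/-!
Write `F = (2N)!`, `x = i!` and `y = F / i!`, so that `x * y = F` and `a_i = x + y`.
Then `f_N(a_i) = (x + y)^2 - 4xy = (y - x)^2`. For monotonicity, two factorisations
`F = x * y = x' * y'` with `x < x' < y` satisfy `x' + y' < x + y`; the middle inequality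
`j! < (2N)!/i!` for `i < j ≤ N` holds because `i! * j! ≤ (i + j)! < (2N)!`.
-/

open Nat

theorem Nat.factorial_mul_factorial_lt_factorial {i j n : ℕ} (hpos : 0 < i + j)
    (h : i + j < n) : i ! * j ! < n ! :=
  calc i ! * j ! ≤ (i + j)! :=
        Nat.le_of_dvd (factorial_pos _) (factorial_mul_factorial_dvd_factorial_add i j)
    _ < n ! := (factorial_lt hpos).mpr h

theorem Nat.add_lt_add_of_mul_eq_mul {a b c d : ℕ} (h : a * b = c * d) (hac : a < c)
    (hcb : c < b) : c + d < a + b := by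
  -- `c * (a + b) - c * (c + d) = (c - a) * (b - c)`
  have key : c * (c + d) < c * (a + b) := by nlinarith
  exact Nat.lt_of_mul_lt_mul_left key

theorem buchi_M_dependence_on_sequence_general (N : ℕ) :
    (∀ i j : ℕ, 1 ≤ i → i < j → j ≤ N →
      (j.factorial + (2 * N).factorial / j.factorial)
        < (i.factorial + (2 * N).factorial / i.factorial)) ∧
    (∀ i : ℕ, 1 ≤ i → i ≤ N →
      0 < i.factorial + (2 * N).factorial / i.factorial) ∧
    (∀ i : ℕ, 1 ≤ i → i ≤ N →
      ∃ m : ℤ,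
        ((i.factorial + (2 * N).factorial / i.factorial : ℕ) : ℤ)^2
          - 4 * ((2 * N).factorial : ℤ) = m^2) := by
  have cofactor {i : ℕ} (hi : i ≤ N) : i ! * ((2 * N)! / i !) = (2 * N)! :=
    Nat.mul_div_cancel' (factorial_dvd_factorial (by omega))
  refine ⟨fun i j hi hij hjN => ?_, fun i _ _ => by positivity, fun i _ hiN => ?_⟩
  · refine Nat.add_lt_add_of_mul_eq_mul ((cofactor (by omega)).trans (cofactor hjN).symm)
      ((factorial_lt hi).mpr hij) ?_
    rw [Nat.lt_div_iff_mul_lt' (factorial_dvd_factorial (by omega)), mul_comm]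
    exact factorial_mul_factorial_lt_factorial (by omega) (by omega)
  · refine ⟨((2 * N)! / i ! : ℕ) - (i ! : ℤ), ?_⟩
    have hF : ((2 * N)! : ℤ) = i ! * ((2 * N)! / i ! : ℕ) := mod_cast (cofactor hiN).symm
    rw [hF, Nat.cast_add]
    ring

theorem buchi_M_dependence_on_sequence (N : ℕ) (hN : 0 < N) :
    (∀ i j : ℕ, 1 ≤ i → i < j → j ≤ N →
      (j.factorial + (2 * N).factorial / j.factorial)
        < (i.factorial + (2 * N).factorial / i.factorial)) ∧
    (∀ i : ℕ, 1 ≤ i → i ≤ N →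
      0 < i.factorial + (2 * N).factorial / i.factorial) ∧
    (∀ i : ℕ, 1 ≤ i → i ≤ N →
      ∃ m : ℤ,
        ((i.factorial + (2 * N).factorial / i.factorial : ℕ) : ℤ)^2
          - 4 * ((2 * N).factorial : ℤ) = m^2) :=
  buchi_M_dependence_on_sequence_general N
end

section
/- Let K be a field of characteristic ≠ 2, a_1 ≠ a_2 in K, and b_1, b_2 ∈ K. Suppose ε' b_2 = ε b_1 + (a_2 - a_1) for signs ε, ε' ∈ {1, -1}. Then the monic quadratic f determined by f(a_1) = b_1^2, f(a_2) = b_2^2 (as in the explicit formula with u = (b_2^2 - b_1^2 - a_2^2 + a_1^2)/(a_2 - a_1)) has discriminant zero, i.e. f(x) = (x + u/2)^2. -/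
open Polynomial

/- The linear coefficient u of the monic quadratic f through (a₁, b₁²) and (a₂, b₂²) satisfies
u + 2a₁ = (b₂² - b₁²)/(a₂ - a₁) - (a₂ - a₁). On a trivial line b₂² = (εb₁ + (a₂ - a₁))², so this is
2εb₁, and since f(a₁) = b₁² the discriminant is u² - 4v = (u + 2a₁)² - 4b₁² = 4b₁²(ε² - 1) = 0. -/

theorem Polynomial.X_sq_add_C_mul_X_add_C_eq_sq {K : Type*} [Field K] (h2 : (2 : K) ≠ 0)
    {u v : K} (h : u ^ 2 - 4 * v = 0) :
    (X ^ 2 + C u * X + C v : K[X]) = (X + C (u / 2)) ^ 2 := by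
  obtain ⟨w, rfl⟩ : ∃ w, u = 2 * w := ⟨u / 2, by field_simp⟩
  have hv : v = w ^ 2 := mul_left_cancel₀ (pow_ne_zero 2 h2) (by linear_combination -h)
  rw [hv, mul_div_cancel_left₀ w h2, C_mul, C_pow, C_ofNat]
  ring

namespace MonicQuadraticInterp

variable {K : Type*} [Field K] {a₁ a₂ b₁ b₂ : K}

def linCoeff (a₁ a₂ b₁ b₂ : K) : K := (b₂ ^ 2 - b₁ ^ 2 - a₂ ^ 2 + a₁ ^ 2) / (a₂ - a₁)

def constCoeff (a₁ a₂ b₁ b₂ : K) : K :=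
  (a₁ * a₂ * (a₂ - a₁) - a₁ * b₂ ^ 2 + a₂ * b₁ ^ 2) / (a₂ - a₁)

theorem eval_left (hne : a₁ ≠ a₂) :
    a₁ ^ 2 + linCoeff a₁ a₂ b₁ b₂ * a₁ + constCoeff a₁ a₂ b₁ b₂ = b₁ ^ 2 := by
  have hd : a₂ - a₁ ≠ 0 := sub_ne_zero.mpr hne.symm
  unfold linCoeff constCoeff
  field_simp
  ring

theorem linCoeff_add_two_mul_of_line {ε ε' : K} (hne : a₁ ≠ a₂) (hε' : ε' ^ 2 = 1)
    (hline : ε' * b₂ = ε * b₁ + (a₂ - a₁)) (hε : ε ^ 2 = 1) :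
    linCoeff a₁ a₂ b₁ b₂ + 2 * a₁ = 2 * ε * b₁ := by
  have hd : a₂ - a₁ ≠ 0 := sub_ne_zero.mpr hne.symm
  have hb₂ : b₂ ^ 2 = (ε * b₁ + (a₂ - a₁)) ^ 2 := by
    rw [← hline, mul_pow, hε', one_mul]
  unfold linCoeff
  field_simp
  linear_combination hb₂ + b₁ ^ 2 * hε

end MonicQuadraticInterp

theorem trivial_line_gives_square_polynomial
    {K : Type*} [Field K] (h2 : (2 : K) ≠ 0)
    (a₁ a₂ b₁ b₂ ε ε' : K) (hne : a₁ ≠ a₂)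
    (hε : ε = 1 ∨ ε = -1) (hε' : ε' = 1 ∨ ε' = -1)
    (hline : ε' * b₂ = ε * b₁ + (a₂ - a₁)) :
    let u : K := (b₂^2 - b₁^2 - a₂^2 + a₁^2) / (a₂ - a₁)
    let v : K := (a₁ * a₂ * (a₂ - a₁) - a₁ * b₂^2 + a₂ * b₁^2) / (a₂ - a₁)
    u^2 - 4 * v = 0 ∧
      (X^2 + C u * X + C v : K[X]) = (X + C (u / 2))^2 := by
  intro u v
  have hε2 : ε ^ 2 = 1 := by rcases hε with rfl | rfl <;> norm_num
  have hε'2 : ε' ^ 2 = 1 := by rcases hε' with rfl | rfl <;> norm_num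
  have hu : u + 2 * a₁ = 2 * ε * b₁ :=
    MonicQuadraticInterp.linCoeff_add_two_mul_of_line hne hε'2 hline hε2
  have hf : a₁ ^ 2 + u * a₁ + v = b₁ ^ 2 := MonicQuadraticInterp.eval_left hne
  have hdisc : u ^ 2 - 4 * v = 0 := by
    linear_combination (u + 2 * a₁ + 2 * ε * b₁) * hu - 4 * hf + 4 * b₁ ^ 2 * hε2
  exact ⟨hdisc, X_sq_add_C_mul_X_add_C_eq_sq h2 hdisc⟩
end

section
/- Let δ_2, ..., δ_n (n ≥ 3) be distinct nonzero elements of an algebraically closed field K, and let [x_0 : ... : x_n] be a point of the surface X_n defined by δ_2 x_i^2 = δ_i δ_2 (δ_i - δ_2) x_0^2 - (δ_i - δ_2) x_1^2 + δ_i x_2^2 (3 ≤ i ≤ n). Then at most two of the coordinates x_0, x_1, ..., x_n are zero. -/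
/-!
Put `X = (x₀², x₁², x₂²)`. Every equation of the surface, and trivially the coordinates `x₀, x₁, x₂`
themselves, say that `δ₂ xᵢ² = vᵢ ⬝ X` where `vᵢ` runs over points of the conic
`(s : t) ↦ (δ₂ t (t - δ₂ s), s (δ₂ s - t), s t)` at the parameters `∞, 0, δ₂, δ₃, …, δₙ`.
These parameters are distinct, so any three of the `vᵢ` have a nonzero (Vandermonde)
determinant. Hence three vanishing coordinates force `X = 0`, and then every `xᵢ` vanishes.
-/

open scoped Classical

open Matrix

section Conic

variable {K : Type*} [Field K]

def conicPoint (d : K) (p : K × K) : Fin 3 → K :=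
  ![d * p.2 * (p.2 - d * p.1), p.1 * (d * p.1 - p.2), p.1 * p.2]

theorem det_conicPoint (d : K) (p q r : K × K) :
    (Matrix.of ![conicPoint d p, conicPoint d q, conicPoint d r]).det =
      d ^ 2 * (p.1 * q.2 - q.1 * p.2) * (p.1 * r.2 - r.1 * p.2) * (q.1 * r.2 - r.1 * q.2) := by
  simp only [det_fin_three, conicPoint, of_apply, cons_val', cons_val_zero, cons_val_one, cons_val,
    cons_val_fin_one]
  ring

theorem eq_zero_of_dotProduct_conicPoint_eq_zero {d : K} (hd : d ≠ 0) {p q r : K × K}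
    (hpq : p.1 * q.2 ≠ q.1 * p.2) (hpr : p.1 * r.2 ≠ r.1 * p.2) (hqr : q.1 * r.2 ≠ r.1 * q.2)
    {X : Fin 3 → K} (hp : conicPoint d p ⬝ᵥ X = 0) (hq : conicPoint d q ⬝ᵥ X = 0)
    (hr : conicPoint d r ⬝ᵥ X = 0) : X = 0 := by
  refine eq_zero_of_mulVec_eq_zero (M := Matrix.of ![conicPoint d p, conicPoint d q,
    conicPoint d r]) ?_ ?_
  · rw [det_conicPoint]
    exact mul_ne_zero (mul_ne_zero (mul_ne_zero (pow_ne_zero 2 hd) (sub_ne_zero.mpr hpq))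
      (sub_ne_zero.mpr hpr)) (sub_ne_zero.mpr hqr)
  · ext i
    fin_cases i <;> assumption

end Conic

section BuchiSurface

variable {K : Type*} [Field K] (δ : ℕ → K)

def buchiParam : ℕ → K × K
  | 0 => (0, 1)
  | 1 => (1, 0)
  | i + 2 => (1, δ (i + 2))

theorem buchiParam_ne {n : ℕ} (hδ : ∀ i, 2 ≤ i → i ≤ n → δ i ≠ 0)
    (hδdist : ∀ i j, 2 ≤ i → i < j → j ≤ n → δ i ≠ δ j) {i j : ℕ} (hij : i < j) (hjn : j ≤ n) :
    (buchiParam δ i).1 * (buchiParam δ j).2 ≠ (buchiParam δ j).1 * (buchiParam δ i).2 := by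
  match i, j with
  | 0, 1 => simp [buchiParam]
  | 0, j + 2 => simp [buchiParam]
  | 1, j + 2 => simpa [buchiParam] using hδ (j + 2) (by omega) hjn
  | i + 2, j + 2 => simpa [buchiParam, eq_comm] using hδdist (i + 2) (j + 2) (by omega) hij hjn

theorem buchiParam_ne_of_ne {n : ℕ} (hδ : ∀ i, 2 ≤ i → i ≤ n → δ i ≠ 0)
    (hδdist : ∀ i j, 2 ≤ i → i < j → j ≤ n → δ i ≠ δ j) {i j : ℕ} (hij : i ≠ j) (hin : i ≤ n)
    (hjn : j ≤ n) :
    (buchiParam δ i).1 * (buchiParam δ j).2 ≠ (buchiParam δ j).1 * (buchiParam δ i).2 := by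
  rcases hij.lt_or_gt with hij | hji
  · exact buchiParam_ne δ hδ hδdist hij hjn
  · exact (buchiParam_ne δ hδ hδdist hji hin).symm

theorem mul_sq_eq_conicPoint_dotProduct {n : ℕ} {x : ℕ → K}
    (heq : ∀ i, 3 ≤ i → i ≤ n →
      δ 2 * (x i)^2 =
        δ i * δ 2 * (δ i - δ 2) * (x 0)^2
          - (δ i - δ 2) * (x 1)^2 + δ i * (x 2)^2)
    {i : ℕ} (hin : i ≤ n) :
    δ 2 * x i ^ 2 = conicPoint (δ 2) (buchiParam δ i) ⬝ᵥ ![x 0 ^ 2, x 1 ^ 2, x 2 ^ 2] := by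
  match i with
  | 0 | 1 | 2 =>
    simp [conicPoint, buchiParam, dotProduct, Fin.sum_univ_three]
  | i + 3 =>
    rw [heq (i + 3) (by omega) hin]
    simp only [conicPoint, buchiParam, dotProduct, Fin.sum_univ_three, cons_val_zero, cons_val_one,
      cons_val, one_mul]
    ring

end BuchiSurface

theorem buchi_surface_at_most_two_zero_coordinates_general
    {K : Type*} [Field K] (n : ℕ)
    (δ : ℕ → K)
    (hδ : ∀ i, 2 ≤ i → i ≤ n → δ i ≠ 0)
    (hδdist : ∀ i j, 2 ≤ i → i < j → j ≤ n → δ i ≠ δ j)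
    (x : ℕ → K)
    (hx : ∃ i, i ≤ n ∧ x i ≠ 0)
    (heq : ∀ i, 3 ≤ i → i ≤ n →
      δ 2 * (x i)^2 =
        δ i * δ 2 * (δ i - δ 2) * (x 0)^2
          - (δ i - δ 2) * (x 1)^2 + δ i * (x 2)^2) :
    ((Finset.range (n + 1)).filter (fun i => x i = 0)).card ≤ 2 := by
  by_contra! hcard
  obtain ⟨a, b, c, ha, hb, hc, hab, hac, hbc⟩ := Finset.two_lt_card_iff.mp hcard
  simp only [Finset.mem_filter, Finset.mem_range, Nat.lt_succ_iff] at ha hb hc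
  have hδ2 : δ 2 ≠ 0 := hδ 2 le_rfl (by omega)
  have hvanish {i : ℕ} (hin : i ≤ n) (hxi : x i = 0) :
      conicPoint (δ 2) (buchiParam δ i) ⬝ᵥ ![x 0 ^ 2, x 1 ^ 2, x 2 ^ 2] = 0 := by
    rw [← mul_sq_eq_conicPoint_dotProduct δ heq hin, hxi]
    ring
  have hX := eq_zero_of_dotProduct_conicPoint_eq_zero hδ2
    (buchiParam_ne_of_ne δ hδ hδdist hab ha.1 hb.1) (buchiParam_ne_of_ne δ hδ hδdist hac ha.1 hc.1)
    (buchiParam_ne_of_ne δ hδ hδdist hbc hb.1 hc.1)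
    (hvanish ha.1 ha.2) (hvanish hb.1 hb.2) (hvanish hc.1 hc.2)
  obtain ⟨m, hmn, hxm⟩ := hx
  have hm := mul_sq_eq_conicPoint_dotProduct δ heq hmn
  rw [hX, dotProduct_zero, mul_eq_zero, pow_eq_zero_iff two_ne_zero] at hm
  exact hxm (hm.resolve_left hδ2)

theorem buchi_surface_at_most_two_zero_coordinates
    {K : Type*} [Field K] [IsAlgClosed K] (n : ℕ) (hn : 3 ≤ n)
    (δ : ℕ → K)
    (hδ : ∀ i, 2 ≤ i → i ≤ n → δ i ≠ 0)
    (hδdist : ∀ i j, 2 ≤ i → i < j → j ≤ n → δ i ≠ δ j)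
    (x : ℕ → K)
    (hx : ∃ i, i ≤ n ∧ x i ≠ 0)
    (heq : ∀ i, 3 ≤ i → i ≤ n →
      δ 2 * (x i)^2 =
        δ i * δ 2 * (δ i - δ 2) * (x 0)^2
          - (δ i - δ 2) * (x 1)^2 + δ i * (x 2)^2) :
    ((Finset.range (n + 1)).filter (fun i => x i = 0)).card ≤ 2 :=
  buchi_surface_at_most_two_zero_coordinates_general n δ hδ hδdist x hx heq
end
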